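/- In a binary tree decomposed into node-disjoint micro trees from the Farzan–Munro algorithm, if a micro tree's BP positions split into exactly two intervals (chunks), then the right chunk begins with a closing parenthesis. -/
import Mathlib


/-- A binary tree: `leaf` is the empty tree; each internal node has an
optional left and an optional right subtree (possibly `leaf`). -/
inductive BinTree : Type where
  | leaf : BinTree
  | node : BinTree → BinTree → BinTree
deriving DecidableEq

namespace BinTree

/-- Number of nodes of a binary tree. -/
def size : BinTree → ℕ
  | leaf => 0
  | node l r => l.size + r.size + 1

/-- BalancedBP-parenthesis encoding of binary trees:
`BP(empty) = ε`, `BP(t) = '(' ++ BP(t_l) ++ ')' ++ BP(t_r)`.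
`true` is an opening parenthesis, `false` a closing one. -/
def bp : BinTree → List Bool
  | leaf => []
  | node l r => true :: (l.bp ++ false :: r.bp)

/-- The subtree reached by following a path (`false` = left, `true` = right). -/
def subtreeAt : BinTree → List Bool → Option BinTree
  | t, [] => some t
  | leaf, _ :: _ => none
  | node l _, false :: p => subtreeAt l p
  | node _ r, true :: p => subtreeAt r p

/-- A path identifies an actual node of the tree (not an empty slot). -/
def ValidPath (t : BinTree) (p : List Bool) : Prop :=
  ∃ l r, subtreeAt t p = some (node l r)

/-- Index (0-based) of the opening parenthesis of the node at a path. -/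
def openIdx : BinTree → List Bool → Option ℕ
  | leaf, _ => none
  | node _ _, [] => some 0
  | node l _, false :: p => (openIdx l p).map (· + 1)
  | node l r, true :: p => (openIdx r p).map (· + (l.bp.length + 2))

/-- Index (0-based) of the closing parenthesis of the node at a path. -/
def closeIdx : BinTree → List Bool → Option ℕ
  | leaf, _ => none
  | node l _, [] => some (l.bp.length + 1)
  | node l _, false :: p => (closeIdx l p).map (· + 1)
  | node l r, true :: p => (closeIdx r p).map (· + (l.bp.length + 2))

/-- Inorder rank (0-based) of the node at a path. -/
def inorderIdx : BinTree → List Bool → Option ℕ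
  | leaf, _ => none
  | node l _, [] => some l.size
  | node l _, false :: p => inorderIdx l p
  | node l r, true :: p => (inorderIdx r p).map (· + (l.size + 1))

end BinTree

/-- A sequence of parentheses (`true` = '(') is balanced: equally many opening
and closing parentheses, and every prefix has at least as many opening ones. -/
def BalancedBP (s : List Bool) : Prop :=
  s.count true = s.count false ∧
  ∀ k, (s.take k).count false ≤ (s.take k).count true

/-- `excess s k`: number of opening minus closing parentheses among the first `k` symbols. -/
def excess (s : List Bool) (k : ℕ) : ℤ :=
  ((s.take k).count true : ℤ) - ((s.take k).count false : ℤ)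

/-- `IsMatch s i j`: positions `i < j` form a matching pair of parentheses
(the standard stack-based matching). -/
def IsMatch (s : List Bool) (i j : ℕ) : Prop :=
  i < j ∧ j < s.length ∧ s[i]? = some true ∧ s[j]? = some false ∧
  excess s (j + 1) = excess s i ∧
  ∀ k, i < k → k ≤ j → excess s i < excess s k

/-- `EnclosePair s i v j`: `j` is the closing parenthesis whose matching pair
tightly encloses the matching pair `(i, v)`. -/
def EnclosePair (s : List Bool) (i v j : ℕ) : Prop :=
  (∃ i', IsMatch s i' j ∧ i' < i ∧ v < j) ∧
  ∀ i'' j'', IsMatch s i'' j'' → i'' < i → v < j'' → j ≤ j''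

/-- Longest common prefix of two paths. -/
def lcp : List Bool → List Bool → List Bool
  | a :: as, b :: bs => if a = b then a :: lcp as bs else []
  | _, _ => []

/-- `M` is a micro tree of `t`: a nonempty, connected set of nodes of `t`
closed between its root and each of its members. -/
def IsMicroTree (t : BinTree) (M : Set (List Bool)) : Prop :=
  M.Nonempty ∧ (∀ p ∈ M, BinTree.ValidPath t p) ∧
  ∃ r ∈ M, ∀ p ∈ M, r <+: p ∧ ∀ q, r <+: q → q <+: p → BinTree.ValidPath t q → q ∈ M

/-- Outgoing edges of `M` towards children: nodes of `t` outside `M` whose parent is in `M`. -/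
def childEdges (t : BinTree) (M : Set (List Bool)) : Set (List Bool) :=
  {q | q ∉ M ∧ BinTree.ValidPath t q ∧ ∃ p ∈ M, ∃ b, q = p ++ [b]}

/-- The set of BP positions (opening and closing parentheses) of the nodes of `M`. -/
def bpPositions (t : BinTree) (M : Set (List Bool)) : Set ℕ :=
  {k | ∃ p ∈ M, BinTree.openIdx t p = some k ∨ BinTree.closeIdx t p = some k}

namespace BinTree

lemma openIdx_valid : ∀ (t : BinTree) (p : List Bool) (k : ℕ),
    openIdx t p = some k → ValidPath t p := by
  intro t
  induction t with
  | leaf => intro p k h; simp [openIdx] at h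
  | node l r ihl ihr =>
    intro p k h
    match p with
    | [] => exact ⟨l, r, rfl⟩
    | false :: p' =>
      simp only [openIdx, Option.map_eq_some_iff] at h
      obtain ⟨m, hm, _⟩ := h
      exact ihl p' m hm
    | true :: p' =>
      simp only [openIdx, Option.map_eq_some_iff] at h
      obtain ⟨m, hm, _⟩ := h
      exact ihr p' m hm

lemma closeIdx_valid : ∀ (t : BinTree) (p : List Bool) (k : ℕ),
    closeIdx t p = some k → ValidPath t p := by
  intro t
  induction t with
  | leaf => intro p k h; simp [closeIdx] at h
  | node l r ihl ihr =>
    intro p k h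
    match p with
    | [] => exact ⟨l, r, rfl⟩
    | false :: p' =>
      simp only [closeIdx, Option.map_eq_some_iff] at h
      obtain ⟨m, hm, _⟩ := h
      exact ihl p' m hm
    | true :: p' =>
      simp only [closeIdx, Option.map_eq_some_iff] at h
      obtain ⟨m, hm, _⟩ := h
      exact ihr p' m hm

lemma valid_openIdx : ∀ (t : BinTree) (p : List Bool),
    ValidPath t p → ∃ k, openIdx t p = some k := by
  intro t
  induction t with
  | leaf =>
    intro p h
    obtain ⟨l', r', h⟩ := h
    cases p <;> simp [subtreeAt] at h
  | node l r ihl ihr =>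
    intro p h
    match p with
    | [] => exact ⟨0, rfl⟩
    | false :: p' =>
      obtain ⟨k, hk⟩ := ihl p' h
      exact ⟨k + 1, by simp [openIdx, hk]⟩
    | true :: p' =>
      obtain ⟨k, hk⟩ := ihr p' h
      exact ⟨k + (l.bp.length + 2), by simp [openIdx, hk]⟩

lemma bp_get_open : ∀ (t : BinTree) (p : List Bool) (k : ℕ),
    openIdx t p = some k → t.bp[k]? = some true := by
  intro t
  induction t with
  | leaf => intro p k h; simp [openIdx] at h
  | node l r ihl ihr =>
    intro p k h
    match p with
    | [] =>
      simp only [openIdx, Option.some.injEq] at h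
      subst h
      simp [bp]
    | false :: p' =>
      simp only [openIdx, Option.map_eq_some_iff] at h
      obtain ⟨m, hm, rfl⟩ := h
      have h1 := ihl p' m hm
      have hlen : m < l.bp.length := (List.getElem?_eq_some_iff.mp h1).1
      show (true :: (l.bp ++ false :: r.bp))[m + 1]? = some true
      rw [List.getElem?_cons_succ, List.getElem?_append_left hlen]
      exact h1
    | true :: p' =>
      simp only [openIdx, Option.map_eq_some_iff] at h
      obtain ⟨m, hm, rfl⟩ := h
      have h1 := ihr p' m hm
      show (true :: (l.bp ++ false :: r.bp))[m + (l.bp.length + 2)]? = some true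
      have e : m + (l.bp.length + 2) = (m + (l.bp.length + 1)) + 1 := by omega
      rw [e, List.getElem?_cons_succ, List.getElem?_append_right (by omega)]
      have e2 : m + (l.bp.length + 1) - l.bp.length = m + 1 := by omega
      rw [e2, List.getElem?_cons_succ]
      exact h1

lemma bp_get_close : ∀ (t : BinTree) (p : List Bool) (k : ℕ),
    closeIdx t p = some k → t.bp[k]? = some false := by
  intro t
  induction t with
  | leaf => intro p k h; simp [closeIdx] at h
  | node l r ihl ihr =>
    intro p k h
    match p with
    | [] =>
      simp only [closeIdx, Option.some.injEq] at h
      subst h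
      show (true :: (l.bp ++ false :: r.bp))[l.bp.length + 1]? = some false
      rw [List.getElem?_cons_succ, List.getElem?_append_right (le_refl _)]
      simp
    | false :: p' =>
      simp only [closeIdx, Option.map_eq_some_iff] at h
      obtain ⟨m, hm, rfl⟩ := h
      have h1 := ihl p' m hm
      have hlen : m < l.bp.length := (List.getElem?_eq_some_iff.mp h1).1
      show (true :: (l.bp ++ false :: r.bp))[m + 1]? = some false
      rw [List.getElem?_cons_succ, List.getElem?_append_left hlen]
      exact h1
    | true :: p' =>
      simp only [closeIdx, Option.map_eq_some_iff] at h
      obtain ⟨m, hm, rfl⟩ := h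
      have h1 := ihr p' m hm
      show (true :: (l.bp ++ false :: r.bp))[m + (l.bp.length + 2)]? = some false
      have e : m + (l.bp.length + 2) = (m + (l.bp.length + 1)) + 1 := by omega
      rw [e, List.getElem?_cons_succ, List.getElem?_append_right (by omega)]
      have e2 : m + (l.bp.length + 1) - l.bp.length = m + 1 := by omega
      rw [e2, List.getElem?_cons_succ]
      exact h1

lemma openIdx_left : ∀ (t : BinTree) (q : List Bool) (k : ℕ),
    openIdx t (q ++ [false]) = some k → ∃ m, openIdx t q = some m ∧ k = m + 1 := by
  intro t
  induction t with
  | leaf => intro q k h; simp [openIdx] at h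
  | node l r ihl ihr =>
    intro q k h
    match q with
    | [] =>
      cases l with
      | leaf => simp [openIdx] at h
      | node l1 l2 =>
        simp only [List.nil_append, openIdx, Option.map_eq_some_iff] at h
        obtain ⟨m, hm, rfl⟩ := h
        simp only [openIdx, Option.some.injEq] at hm
        exact ⟨0, rfl, by omega⟩
    | false :: q' =>
      simp only [List.cons_append, openIdx, Option.map_eq_some_iff] at h
      obtain ⟨m, hm, rfl⟩ := h
      obtain ⟨m', hm', rfl⟩ := ihl q' m hm
      exact ⟨m' + 1, by simp [openIdx, hm'], by omega⟩
    | true :: q' =>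
      simp only [List.cons_append, openIdx, Option.map_eq_some_iff] at h
      obtain ⟨m, hm, rfl⟩ := h
      obtain ⟨m', hm', rfl⟩ := ihr q' m hm
      exact ⟨m' + (l.bp.length + 2), by simp [openIdx, hm'], by omega⟩

lemma openIdx_right : ∀ (t : BinTree) (q : List Bool) (k : ℕ),
    openIdx t (q ++ [true]) = some k → ∃ m, closeIdx t q = some m ∧ k = m + 1 := by
  intro t
  induction t with
  | leaf => intro q k h; simp [openIdx] at h
  | node l r ihl ihr =>
    intro q k h
    match q with
    | [] =>
      cases r with
      | leaf => simp [openIdx] at h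
      | node r1 r2 =>
        simp only [List.nil_append, openIdx, Option.map_eq_some_iff] at h
        obtain ⟨m, hm, rfl⟩ := h
        simp only [openIdx, Option.some.injEq] at hm
        exact ⟨l.bp.length + 1, rfl, by omega⟩
    | false :: q' =>
      simp only [List.cons_append, openIdx, Option.map_eq_some_iff] at h
      obtain ⟨m, hm, rfl⟩ := h
      obtain ⟨m', hm', rfl⟩ := ihl q' m hm
      exact ⟨m' + 1, by simp [closeIdx, hm'], by omega⟩
    | true :: q' =>
      simp only [List.cons_append, openIdx, Option.map_eq_some_iff] at h
      obtain ⟨m, hm, rfl⟩ := h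
      obtain ⟨m', hm', rfl⟩ := ihr q' m hm
      exact ⟨m' + (l.bp.length + 2), by simp [closeIdx, hm'], by omega⟩

lemma open_lt_close : ∀ (t : BinTree) (p : List Bool) (k m : ℕ),
    openIdx t p = some k → closeIdx t p = some m → k < m := by
  intro t
  induction t with
  | leaf => intro p k m h; simp [openIdx] at h
  | node l r ihl ihr =>
    intro p k m ho hc
    match p with
    | [] =>
      simp only [openIdx, Option.some.injEq] at ho
      simp only [closeIdx, Option.some.injEq] at hc
      omega
    | false :: p' =>
      simp only [openIdx, Option.map_eq_some_iff] at ho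
      simp only [closeIdx, Option.map_eq_some_iff] at hc
      obtain ⟨k', hk', rfl⟩ := ho
      obtain ⟨m', hm', rfl⟩ := hc
      have := ihl p' k' m' hk' hm'
      omega
    | true :: p' =>
      simp only [openIdx, Option.map_eq_some_iff] at ho
      simp only [closeIdx, Option.map_eq_some_iff] at hc
      obtain ⟨k', hk', rfl⟩ := ho
      obtain ⟨m', hm', rfl⟩ := hc
      have := ihr p' k' m' hk' hm'
      omega

lemma openIdx_mono : ∀ (t : BinTree) (q s : List Bool) (k m : ℕ),
    openIdx t q = some k → openIdx t (q ++ s) = some m → k ≤ m := by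
  intro t
  induction t with
  | leaf => intro q s k m h; simp [openIdx] at h
  | node l r ihl ihr =>
    intro q s k m hq hqs
    match q with
    | [] =>
      simp only [openIdx, Option.some.injEq] at hq
      omega
    | false :: q' =>
      simp only [List.cons_append, openIdx, Option.map_eq_some_iff] at hq hqs
      obtain ⟨k', hk', rfl⟩ := hq
      obtain ⟨m', hm', rfl⟩ := hqs
      have := ihl q' s k' m' hk' hm'
      omega
    | true :: q' =>
      simp only [List.cons_append, openIdx, Option.map_eq_some_iff] at hq hqs
      obtain ⟨k', hk', rfl⟩ := hq
      obtain ⟨m', hm', rfl⟩ := hqs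
      have := ihr q' s k' m' hk' hm'
      omega


end BinTree

/-- if the BP positions of a micro tree split into exactly two
(nonempty, separated) intervals, the right chunk begins with a closing
parenthesis. -/
theorem right_chunk_begins_with_close (t : BinTree) (M : Set (List Bool))
    (hM : IsMicroTree t M)
    (hsingle : 2 ≤ (childEdges t M).ncard → ∃ p, M = {p})
    (a b c d : ℕ)
    (hpos : bpPositions t M = Set.Ico a b ∪ Set.Ico c d)
    (hab : a < b) (hbc : b < c) (hcd : c < d) :
    t.bp[c]? = some false := by
  obtain ⟨hne, hvalid, rt, hrtM, hclose⟩ := hM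
  have hc : c ∈ bpPositions t M := by
    rw [hpos]; right; exact ⟨le_refl c, hcd⟩
  obtain ⟨p, hpM, hp⟩ := hc
  rcases hp with ho | hc'
  · exfalso
    by_cases hpr : p = rt
    · subst hpr
      have ha : a ∈ bpPositions t M := by
        rw [hpos]; left; exact ⟨le_refl a, hab⟩
      obtain ⟨p', hp'M, hp'⟩ := ha
      obtain ⟨hpre, _⟩ := hclose p' hp'M
      obtain ⟨s, rfl⟩ := hpre
      rcases hp' with ho' | hcl'
      · have := BinTree.openIdx_mono t p s c a ho ho'
        omega
      · obtain ⟨m, hm⟩ := BinTree.valid_openIdx t (p ++ s) (hvalid _ hp'M)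
        have h1 := BinTree.openIdx_mono t p s c m ho hm
        have h2 := BinTree.open_lt_close t (p ++ s) m a hm hcl'
        omega
    · obtain ⟨hpre, hcl⟩ := hclose p hpM
      have hlen : rt.length < p.length := by
        have h1 := hpre.length_le
        rcases h1.lt_or_eq with h | h
        · exact h
        · exact absurd (hpre.eq_of_length h).symm hpr
      rcases List.eq_nil_or_concat p with rfl | ⟨q, dir, rfl⟩
      · simp at hlen
      · simp only [List.concat_eq_append] at ho hpre hlen
        have hqp : q <+: q ++ [dir] := ⟨[dir], rfl⟩
        have hrq : rt <+: q := by
          refine List.prefix_of_prefix_length_le hpre hqp ?_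
          simp at hlen ⊢; omega
        have key : ∃ m, (BinTree.openIdx t q = some m ∨ BinTree.closeIdx t q = some m) ∧
            c = m + 1 ∧ BinTree.ValidPath t q := by
          cases dir with
          | false =>
            obtain ⟨m, hq, he⟩ := BinTree.openIdx_left t q c ho
            exact ⟨m, Or.inl hq, he, BinTree.openIdx_valid t q m hq⟩
          | true =>
            obtain ⟨m, hq, he⟩ := BinTree.openIdx_right t q c ho
            exact ⟨m, Or.inr hq, he, BinTree.closeIdx_valid t q m hq⟩
        obtain ⟨m, hq, he, hvq⟩ := key
        have hqM : q ∈ M := hcl q hrq (by simp [List.concat_eq_append]) hvq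
        have hmem : m ∈ bpPositions t M := ⟨q, hqM, hq⟩
        rw [hpos] at hmem
        rcases hmem with ⟨h1, h2⟩ | ⟨h1, h2⟩ <;> omega
  · exact BinTree.bp_get_close t p c hc'
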